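/- Let p ∈ {3, 11} and k ≥ 0, and let E^∞(q) = 1 − c·∑_{n≥1} (∑_{d|n} χ_p(d) d^{2k}) q^n where c = (4k+2)/B_{2k+1,p}. Then as formal power series, E^∞(−q) = −E^∞(q) + (2 − 2^{2k+1})·E^∞(q²) + 2^{2k+1}·E^∞(q⁴). -/

import Mathlib

noncomputable section

instance : Fact (Nat.Prime 11) := ⟨by norm_num⟩

/-- `substPow m f` is the power series `f(X^m)`. -/
def substPow (m : ℕ) (f : PowerSeries ℚ) : PowerSeries ℚ :=
  PowerSeries.mk fun n => if m ∣ n then PowerSeries.coeff (R := ℚ) (n / m) f else 0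

/-- The generalized Bernoulli number `B_{k,χ_p}` attached to the Legendre symbol mod `p`,
via the classical formula `B_{k,χ} = f^{k-1} ∑_{j<f} χ(j) B_k(j/f)`. -/
def genBernoulli (p : ℕ) [Fact p.Prime] (k : ℕ) : ℚ :=
  (p : ℚ) ^ (k - 1) *
    ∑ j ∈ Finset.range p, (legendreSym p (j : ℤ) : ℚ) * (Polynomial.bernoulli k).eval ((j : ℚ) / p)

/-!
Write `σ(n) = ∑_{d ∣ n} χ_p(d) d^{2k}`. Splitting the divisors of `2m` by parity and using
`χ_p(2) = -1` (as `p ≡ 3 mod 8`) gives the Hecke-type relation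
`σ(2m) = (1 - 2^{2k}) σ(m) + 2^{2k} σ(m/2)`, where `σ(m/2) = 0` for odd `m`. Comparing
coefficients, `E(-q)` and `E(q)` agree at even exponents and are opposite at odd ones, and at an
even exponent `2m` the relation is exactly the claimed identity.
-/

open PowerSeries

namespace Nat

theorem filter_odd_divisors_two_mul (m : ℕ) :
    {d ∈ (2 * m).divisors | Odd d} = {d ∈ m.divisors | Odd d} := by
  ext d
  simp only [Finset.mem_filter, Nat.mem_divisors]
  constructor
  · rintro ⟨⟨hd, hm⟩, hodd⟩
    exact ⟨⟨(Nat.coprime_two_right.mpr hodd).dvd_of_dvd_mul_left hd, by omega⟩, hodd⟩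
  · rintro ⟨⟨hd, hm⟩, hodd⟩
    exact ⟨⟨hd.mul_left 2, by omega⟩, hodd⟩

theorem filter_even_divisors_two_mul (m : ℕ) :
    {d ∈ (2 * m).divisors | Even d} =
      m.divisors.map ⟨(2 * ·), mul_right_injective₀ two_ne_zero⟩ := by
  ext d
  simp only [Finset.mem_filter, Nat.mem_divisors, Finset.mem_map, Function.Embedding.coeFn_mk]
  constructor
  · rintro ⟨⟨hd, hm⟩, e, rfl⟩
    exact ⟨e, ⟨Nat.dvd_of_mul_dvd_mul_left two_pos (by rwa [two_mul]), by omega⟩, two_mul e⟩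
  · rintro ⟨e, ⟨he, hm⟩, rfl⟩
    exact ⟨⟨mul_dvd_mul_left 2 he, by omega⟩, even_two_mul e⟩

section DivisorSum

variable {R : Type*} [CommRing R] (f : ℕ → R)

theorem sum_divisors_two_mul (m : ℕ) :
    ∑ d ∈ (2 * m).divisors, f d = ∑ d ∈ m.divisors with Odd d, f d + ∑ e ∈ m.divisors, f (2 * e) := by
  rw [← Finset.sum_filter_add_sum_filter_not _ Odd, filter_odd_divisors_two_mul]
  simp only [Nat.not_odd_iff_even, filter_even_divisors_two_mul, Finset.sum_map,
    Function.Embedding.coeFn_mk]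

variable {f} {a : R} (hf : ∀ e, f (2 * e) = a * f e)
include hf

theorem sum_divisors_two_mul_of_map_two_mul (m : ℕ) :
    ∑ d ∈ (2 * m).divisors, f d =
      ∑ d ∈ m.divisors with Odd d, f d + a * ∑ d ∈ m.divisors, f d := by
  simp only [sum_divisors_two_mul, hf, Finset.mul_sum]

theorem sum_divisors_two_mul_eq (m : ℕ) :
    ∑ d ∈ (2 * m).divisors, f d = (1 + a) * ∑ d ∈ m.divisors, f d -
      a * (if 2 ∣ m then ∑ d ∈ (m / 2).divisors, f d else 0) := by
  rw [sum_divisors_two_mul_of_map_two_mul hf]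
  by_cases hm : 2 ∣ m
  · obtain ⟨r, rfl⟩ := hm
    rw [if_pos (dvd_mul_right 2 r), Nat.mul_div_cancel_left r two_pos, filter_odd_divisors_two_mul,
      sum_divisors_two_mul_of_map_two_mul hf r]
    ring
  · have hodd : ∀ d ∈ m.divisors, Odd d := fun d hd =>
      (Nat.odd_iff.mpr (by omega)).of_dvd_nat (Nat.dvd_of_mem_divisors hd)
    rw [if_neg hm, Finset.filter_true_of_mem hodd]
    ring

end DivisorSum

end Nat

theorem coeff_substPow (m n : ℕ) (f : PowerSeries ℚ) :
    coeff n (substPow m f) = if m ∣ n then coeff (n / m) f else 0 :=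
  coeff_mk _ _

theorem coeff_mul_substPow_mul {a : ℕ} (ha : a ≠ 0) (b n : ℕ) (f : PowerSeries ℚ) :
    coeff (a * n) (substPow (a * b) f) = coeff n (substPow b f) := by
  simp only [coeff_substPow, Nat.mul_dvd_mul_iff_left (Nat.pos_of_ne_zero ha),
    Nat.mul_div_mul_left _ _ (Nat.pos_of_ne_zero ha)]

theorem coeff_mul_substPow {a : ℕ} (ha : a ≠ 0) (n : ℕ) (f : PowerSeries ℚ) :
    coeff (a * n) (substPow a f) = coeff n f := by
  simp [coeff_substPow, Nat.mul_div_cancel_left n (Nat.pos_of_ne_zero ha)]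

theorem coeff_substPow_of_not_dvd {m n : ℕ} (h : ¬ m ∣ n) (f : PowerSeries ℚ) :
    coeff n (substPow m f) = 0 := by
  rw [coeff_substPow, if_neg h]

theorem rescale_neg_one_eq_of_coeff_two_mul (w : ℚ) (E : PowerSeries ℚ)
    (h : ∀ m, coeff (2 * m) E = (1 - w) * coeff m E + w * coeff m (substPow 2 E)) :
    rescale (-1) E = -E + (2 - 2 * w) • substPow 2 E + (2 * w) • substPow 4 E := by
  ext n
  simp only [coeff_rescale, map_add, map_neg, coeff_smul, smul_eq_mul]
  rcases Nat.even_or_odd' n with ⟨m, rfl | rfl⟩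
  · rw [show 4 = 2 * 2 from rfl, coeff_mul_substPow_mul two_ne_zero, coeff_mul_substPow two_ne_zero,
      pow_mul, neg_one_sq, one_pow]
    linear_combination 2 * h m
  · rw [coeff_substPow_of_not_dvd (by omega), coeff_substPow_of_not_dvd (by omega),
      (odd_two_mul_add_one m).neg_one_pow]
    ring

theorem legendreSym_two_of_eq_three_or_eleven {p : ℕ} [Fact p.Prime] (hp : p = 3 ∨ p = 11) :
    legendreSym p 2 = -1 := by
  rw [legendreSym.at_two (by omega)]
  rcases hp with rfl | rfl <;> decide

theorem statement11_general (p : ℕ) [Fact p.Prime] (hp : p = 3 ∨ p = 11) (k : ℕ)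
    (c : ℚ)
    (E : PowerSeries ℚ)
    (hE : E = PowerSeries.mk fun n =>
      if n = 0 then 1
      else -c * ∑ d ∈ n.divisors, (legendreSym p (d : ℤ) : ℚ) * (d : ℚ) ^ (2 * k)) :
    PowerSeries.rescale (-1 : ℚ) E =
      -E + ((2 : ℚ) - 2 ^ (2 * k + 1)) • substPow 2 E + (2 : ℚ) ^ (2 * k + 1) • substPow 4 E := by
  have hχ : ∀ e : ℕ, (legendreSym p ((2 * e : ℕ) : ℤ) : ℚ) * ((2 * e : ℕ) : ℚ) ^ (2 * k) =
      -2 ^ (2 * k) * ((legendreSym p (e : ℤ) : ℚ) * (e : ℚ) ^ (2 * k)) := fun e => by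
    push_cast
    rw [legendreSym.mul, legendreSym_two_of_eq_three_or_eleven hp]
    push_cast
    ring
  rw [pow_succ']
  refine rescale_neg_one_eq_of_coeff_two_mul _ E fun m => ?_
  rcases eq_or_ne m 0 with rfl | hm
  · simp [hE, coeff_substPow, -coeff_zero_eq_constantCoeff]
  have hσ := Nat.sum_divisors_two_mul_eq
    (f := fun d : ℕ => (legendreSym p (d : ℤ) : ℚ) * (d : ℚ) ^ (2 * k)) hχ m
  simp only [hE, coeff_mk, coeff_substPow, mul_eq_zero, two_ne_zero, hm, or_self,
    if_false]
  split_ifs at hσ ⊢ with h2 h0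
  · omega
  · linear_combination (-c) * hσ
  · linear_combination (-c) * hσ

theorem statement11 (p : ℕ) [Fact p.Prime] (hp : p = 3 ∨ p = 11) (k : ℕ)
    (c : ℚ) (hc : c = (4 * k + 2 : ℚ) / genBernoulli p (2 * k + 1))
    (E : PowerSeries ℚ)
    (hE : E = PowerSeries.mk fun n =>
      if n = 0 then 1
      else -c * ∑ d ∈ n.divisors, (legendreSym p (d : ℤ) : ℚ) * (d : ℚ) ^ (2 * k)) :
    PowerSeries.rescale (-1 : ℚ) E =
      -E + ((2 : ℚ) - 2 ^ (2 * k + 1)) • substPow 2 E + (2 : ℚ) ^ (2 * k + 1) • substPow 4 E :=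
  statement11_general p hp k c E hE
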